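/- If π* is the optimal policy of the entropy-regularised MDP, i.e. π*(da|s) = exp(−(Q*(s,a) − V*(s))/τ) μ(da) with Q*(s,a) = c(s,a) + γ ∫ V*(s') P(ds'|s,a), then for every policy π' ∈ Π_μ and initial distribution ρ, V^{π'}_τ(ρ) − V^{π*}_τ(ρ) = (τ/(1−γ)) ∫_S KL(π'(·|s) | π*(·|s)) d^{π'}_ρ(ds). -/

import Mathlib

/-! The Gibbs form of `π*` says exactly that `Q* + τ ln(dπ*/dμ) = V*` holds `μ`-a.e. in the action,
so the first-order term of the performance difference lemma vanishes and only the KL term is left.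
Since `Q*(s, ·)` is not assumed measurable, the a.e. identity is only available against policies
for which it is a.e. measurable. Against the others both integrals are the junk value `0`, which
is consistent with the Bellman equation because the density of `π*` is bounded below, so that
`μ ≪ π*` and `Q*(s, ·)` is not a.e. measurable for `π*` either. -/

open MeasureTheory ENNReal

/-- Induced state kernel `P_π(·|s) = ∫_A P(·|s,a) π(da|s)`. -/
noncomputable def stepKernel {S A : Type*} [MeasurableSpace S] [MeasurableSpace A]
    (P : S → A → Measure S) (pol : S → Measure A) (s : S) : Measure S :=
  (pol s).bind (fun a => P s a)

/-- `n`-fold composition of a state kernel, with `P^0_π(·|s) = δ_s`. -/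
noncomputable def iterKernel {S : Type*} [MeasurableSpace S]
    (Pπ : S → Measure S) : ℕ → S → Measure S
  | 0, s => Measure.dirac s
  | (n + 1), s => (Pπ s).bind (iterKernel Pπ n)

/-- Discounted occupancy measure `d^π_ρ = (1-γ) ∑ γ^n ∫ P^n_π(·|s') ρ(ds')`. -/
noncomputable def occMeasure {S : Type*} [MeasurableSpace S]
    (Pπ : S → Measure S) (ρ : Measure S) (γ : ℝ) : Measure S :=
  ENNReal.ofReal (1 - γ) •
    Measure.sum (fun n : ℕ => (ENNReal.ofReal γ) ^ n • ρ.bind (iterKernel Pπ n))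

/-- Real-valued KL divergence `KL(m|m') = ∫ ln(dm/dm') dm`. -/
noncomputable def klReal {A : Type*} [MeasurableSpace A] (m m' : Measure A) : ℝ :=
  ∫ a, llr m m' a ∂m

section WithDensity

variable {α : Type*} [MeasurableSpace α] {μ m : Measure α}

/-- Off an `m`-null set, `f` agrees with a measurable modification, and there the two densities
can be compared. -/
theorem ae_eq_of_withDensity_eq_of_aemeasurable [SigmaFinite μ] {f g : α → ℝ≥0∞}
    (hfg : μ.withDensity f = μ.withDensity g) (hg : AEMeasurable g μ) (hm : m ≪ μ)
    (hf : AEMeasurable f m) : f =ᵐ[m] g := by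
  set Z := toMeasurable m {a | ¬f a = hf.mk f a}
  have hZ : MeasurableSet Zᶜ := (measurableSet_toMeasurable _ _).compl
  have hmZ : m.restrict Zᶜ = m := by
    refine Measure.restrict_eq_self_of_ae_mem (compl_mem_ae_iff.mpr ?_)
    rw [measure_toMeasurable]
    exact ae_iff.mp hf.ae_eq_mk
  have hf_mk : f =ᵐ[μ.restrict Zᶜ] hf.mk f := by
    refine (ae_restrict_iff' hZ).mpr (Filter.Eventually.of_forall fun a ha => ?_)
    by_contra hne
    exact ha (subset_toMeasurable _ _ hne)
  have hmk_g : hf.mk f =ᵐ[μ.restrict Zᶜ] g := by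
    refine (withDensity_eq_iff_of_sigmaFinite hf.measurable_mk.aemeasurable hg.restrict).mp ?_
    rw [← withDensity_congr_ae hf_mk, ← restrict_withDensity hZ, ← restrict_withDensity hZ, hfg]
  have hmk_g' := (hm.restrict Zᶜ).ae_eq hmk_g
  rw [hmZ] at hmk_g'
  exact hf.ae_eq_mk.trans hmk_g'

theorem absolutelyContinuous_withDensity_of_forall_le {f : α → ℝ≥0∞} {δ : ℝ≥0∞} (hδ : δ ≠ 0)
    (hf : ∀ a, δ ≤ f a) : μ ≪ μ.withDensity f := by
  have hle : δ • μ ≤ μ.withDensity f := by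
    rw [← withDensity_const]
    exact withDensity_mono (Filter.Eventually.of_forall hf)
  exact (Measure.absolutelyContinuous_smul hδ).trans (Measure.absolutelyContinuous_of_le hle)

end WithDensity

section Gibbs

variable {α : Type*} [MeasurableSpace α] {μ m ν : Measure α} {q : α → ℝ} {v τ M : ℝ}

theorem add_log_rnDeriv_gibbs_ae_eq [SigmaFinite μ] (hτ : τ ≠ 0) (hm : m ≪ μ)
    (hq : AEMeasurable q m) :
    ∀ᵐ a ∂m, q a + τ * Real.log
      (((μ.withDensity fun a => ENNReal.ofReal (Real.exp (-(q a - v) / τ))).rnDeriv μ a).toReal)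
        = v := by
  set f : α → ℝ≥0∞ := fun a => ENNReal.ofReal (Real.exp (-(q a - v) / τ))
  have hf : AEMeasurable f m := by fun_prop
  have hf_rnDeriv : f =ᵐ[m] (μ.withDensity f).rnDeriv μ :=
    ae_eq_of_withDensity_eq_of_aemeasurable
      (Measure.withDensity_rnDeriv_eq _ _ (withDensity_absolutelyContinuous _ _)).symm
      (Measure.measurable_rnDeriv _ _).aemeasurable hm hf
  filter_upwards [hf_rnDeriv] with a ha
  rw [← ha, ENNReal.toReal_ofReal (Real.exp_pos _).le, Real.log_exp]
  field_simp
  ring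

theorem integral_add_log_rnDeriv_gibbs [SigmaFinite μ] [IsProbabilityMeasure m] (hτ : 0 < τ)
    (hqM : ∀ a, |q a - v| ≤ M)
    (hν : ν = μ.withDensity fun a => ENNReal.ofReal (Real.exp (-(q a - v) / τ)))
    (hv : v = ∫ a, (q a + τ * Real.log ((ν.rnDeriv μ a).toReal)) ∂ν) (hm : m ≪ μ) :
    ∫ a, (q a + τ * Real.log ((ν.rnDeriv μ a).toReal)) ∂m = v := by
  by_cases hq : AEMeasurable q m
  · subst hν
    rw [integral_congr_ae (add_log_rnDeriv_gibbs_ae_eq hτ.ne' hm hq)]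
    simp
  -- Otherwise both integrals are junk values, as `m ≪ μ ≪ ν`.
  have hμν : μ ≪ ν := by
    refine hν ▸ absolutelyContinuous_withDensity_of_forall_le
      (δ := ENNReal.ofReal (Real.exp (-M / τ))) (by positivity) fun a => ?_
    refine ENNReal.ofReal_le_ofReal (Real.exp_le_exp.mpr ?_)
    rw [neg_div, neg_div]
    exact neg_le_neg (div_le_div_of_nonneg_right ((le_abs_self _).trans (hqM a)) hτ.le)
  have hlog : Measurable fun a => τ * Real.log ((ν.rnDeriv μ a).toReal) := by fun_prop
  have h_undef : ∀ m' : Measure α, ¬AEMeasurable q m' →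
      ∫ a, (q a + τ * Real.log ((ν.rnDeriv μ a).toReal)) ∂m' = 0 := fun m' hq' =>
    integral_undef fun hi => hq' ((hi.aemeasurable.sub hlog.aemeasurable).congr
      (Filter.Eventually.of_forall fun a => add_sub_cancel_right (q a) _))
  rw [h_undef m hq, hv, h_undef ν fun hqν => hq (hqν.mono_ac (hm.trans hμν))]

end Gibbs

theorem abs_add_mul_integral_sub_le {S : Type*} [Fintype S] [MeasurableSpace S]
    (ν : Measure S) [IsProbabilityMeasure ν] {x C : ℝ} (hx : |x| ≤ C) (γ : ℝ) (V : S → ℝ)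
    (s : S) :
    |x + γ * ∫ s', V s' ∂ν - V s| ≤ C + |γ| * ∑ s', |V s'| + ∑ s', |V s'| := by
  have hV : ∀ s, |V s| ≤ ∑ s', |V s'| := fun s =>
    Finset.single_le_sum (f := fun s' => |V s'|) (fun _ _ => abs_nonneg _) (Finset.mem_univ s)
  have hint : |∫ s', V s' ∂ν| ≤ ∑ s', |V s'| := by
    simpa using norm_integral_le_of_norm_le_const (μ := ν)
      (Filter.Eventually.of_forall fun s => (Real.norm_eq_abs _).trans_le (hV s))
  calc |x + γ * ∫ s', V s' ∂ν - V s| ≤ |x| + |γ| * |∫ s', V s' ∂ν| + |V s| := by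
        rw [← abs_mul]
        exact (abs_sub _ _).trans (add_le_add_left (abs_add_le _ _) _)
    _ ≤ C + |γ| * ∑ s', |V s'| + ∑ s', |V s'| := by gcongr; exact hV s

theorem value_gap_eq_kl_against_optimal_general
    {S A : Type*} [Fintype S] [MeasurableSpace S]
    [MeasurableSpace A]
    (μ : Measure A) [IsProbabilityMeasure μ]
    (P : S → A → Measure S) (hP : ∀ s a, IsProbabilityMeasure (P s a))
    (c : S → A → ℝ) (C : ℝ) (hc : ∀ s a, |c s a| ≤ C)
    (γ τ : ℝ) (hτ : 0 < τ)
    (ρ : Measure S)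
    (V : (S → Measure A) → S → ℝ) (Q : (S → Measure A) → S → A → ℝ)
    -- definition of the Q-function
    (hQ : ∀ pol s a, Q pol s a = c s a + γ * ∫ s', V pol s' ∂(P s a))
    -- on-policy Bellman equation
    (hBellman : ∀ pol : S → Measure A, (∀ s, IsProbabilityMeasure (pol s)) →
      (∀ s, pol s ≪ μ) → ∀ s,
        V pol s = ∫ a, (Q pol s a + τ * Real.log (((pol s).rnDeriv μ a).toReal)) ∂(pol s))
    -- performance difference lemma
    (hperf : ∀ pol pol' : S → Measure A,
      (∀ s, IsProbabilityMeasure (pol s)) → (∀ s, pol s ≪ μ) →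
      (∀ s, IsProbabilityMeasure (pol' s)) → (∀ s, pol' s ≪ μ) →
      (∫ s, V pol s ∂ρ) - (∫ s, V pol' s ∂ρ)
        = (1 / (1 - γ)) *
            ∫ s, ((∫ a, (Q pol' s a + τ * Real.log (((pol' s).rnDeriv μ a).toReal)) ∂(pol s))
                  - (∫ a, (Q pol' s a + τ * Real.log (((pol' s).rnDeriv μ a).toReal)) ∂(pol' s))
                  + τ * klReal (pol s) (pol' s))
              ∂(occMeasure (stepKernel P pol) ρ γ))
    -- the optimal Gibbs policy
    (πstar : S → Measure A) (hπstarProb : ∀ s, IsProbabilityMeasure (πstar s))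
    (hGibbs : ∀ s, πstar s =
      μ.withDensity fun a => ENNReal.ofReal (Real.exp (-(Q πstar s a - V πstar s) / τ)))
    -- an arbitrary policy in `Π_μ`
    (π' : S → Measure A) (hπ'Prob : ∀ s, IsProbabilityMeasure (π' s))
    (hπ'ac : ∀ s, π' s ≪ μ) :
    (∫ s, V π' s ∂ρ) - (∫ s, V πstar s ∂ρ)
      = (τ / (1 - γ)) *
          ∫ s, klReal (π' s) (πstar s) ∂(occMeasure (stepKernel P π') ρ γ) := by
  have hπstar_ac : ∀ s, πstar s ≪ μ := fun s => hGibbs s ▸ withDensity_absolutelyContinuous μ _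
  have hkey : ∀ s (m : Measure A), IsProbabilityMeasure m → m ≪ μ →
      ∫ a, (Q πstar s a + τ * Real.log (((πstar s).rnDeriv μ a).toReal)) ∂m = V πstar s :=
    fun s m _ hm => integral_add_log_rnDeriv_gibbs hτ
      (M := C + |γ| * ∑ s', |V πstar s'| + ∑ s', |V πstar s'|)
      (fun a => by
        have := hP s a
        rw [hQ]
        exact abs_add_mul_integral_sub_le (P s a) (hc s a) γ _ s)
      (hGibbs s) (hBellman πstar hπstarProb hπstar_ac s) hm
  have hgap : ∀ s,
      (∫ a, (Q πstar s a + τ * Real.log (((πstar s).rnDeriv μ a).toReal)) ∂(π' s))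
        - (∫ a, (Q πstar s a + τ * Real.log (((πstar s).rnDeriv μ a).toReal)) ∂(πstar s))
        + τ * klReal (π' s) (πstar s) = τ * klReal (π' s) (πstar s) := fun s => by
    rw [hkey s _ (hπ'Prob s) (hπ'ac s), hkey s _ (hπstarProb s) (hπstar_ac s)]
    ring
  rw [hperf π' πstar hπ'Prob hπ'ac hπstarProb hπstar_ac, integral_congr_ae
    (Filter.Eventually.of_forall hgap), integral_const_mul]
  ring

/-- for the optimal Gibbs policy `π*`,
`V^{π'}_τ(ρ) − V^{π*}_τ(ρ) = (τ/(1−γ)) ∫_S KL(π'(·|s)|π*(·|s)) d^{π'}_ρ(ds)`,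
assuming the performance difference lemma. -/
theorem value_gap_eq_kl_against_optimal
    {S A : Type*} [Fintype S] [MeasurableSpace S] [MeasurableSingletonClass S]
    [MeasurableSpace A]
    (μ : Measure A) [IsProbabilityMeasure μ]
    (P : S → A → Measure S) (hP : ∀ s a, IsProbabilityMeasure (P s a))
    (c : S → A → ℝ) (C : ℝ) (hc : ∀ s a, |c s a| ≤ C)
    (γ τ : ℝ) (hγ0 : 0 ≤ γ) (hγ1 : γ < 1) (hτ : 0 < τ)
    (ρ : Measure S) [IsProbabilityMeasure ρ]
    (V : (S → Measure A) → S → ℝ) (Q : (S → Measure A) → S → A → ℝ)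
    -- definition of the Q-function
    (hQ : ∀ pol s a, Q pol s a = c s a + γ * ∫ s', V pol s' ∂(P s a))
    -- on-policy Bellman equation
    (hBellman : ∀ pol : S → Measure A, (∀ s, IsProbabilityMeasure (pol s)) →
      (∀ s, pol s ≪ μ) → ∀ s,
        V pol s = ∫ a, (Q pol s a + τ * Real.log (((pol s).rnDeriv μ a).toReal)) ∂(pol s))
    -- performance difference lemma
    (hperf : ∀ pol pol' : S → Measure A,
      (∀ s, IsProbabilityMeasure (pol s)) → (∀ s, pol s ≪ μ) →
      (∀ s, IsProbabilityMeasure (pol' s)) → (∀ s, pol' s ≪ μ) →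
      (∫ s, V pol s ∂ρ) - (∫ s, V pol' s ∂ρ)
        = (1 / (1 - γ)) *
            ∫ s, ((∫ a, (Q pol' s a + τ * Real.log (((pol' s).rnDeriv μ a).toReal)) ∂(pol s))
                  - (∫ a, (Q pol' s a + τ * Real.log (((pol' s).rnDeriv μ a).toReal)) ∂(pol' s))
                  + τ * klReal (pol s) (pol' s))
              ∂(occMeasure (stepKernel P pol) ρ γ))
    -- the optimal Gibbs policy
    (πstar : S → Measure A) (hπstarProb : ∀ s, IsProbabilityMeasure (πstar s))
    (hGibbs : ∀ s, πstar s =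
      μ.withDensity fun a => ENNReal.ofReal (Real.exp (-(Q πstar s a - V πstar s) / τ)))
    -- an arbitrary policy in `Π_μ`
    (π' : S → Measure A) (hπ'Prob : ∀ s, IsProbabilityMeasure (π' s))
    (hπ'ac : ∀ s, π' s ≪ μ) :
    (∫ s, V π' s ∂ρ) - (∫ s, V πstar s ∂ρ)
      = (τ / (1 - γ)) *
          ∫ s, klReal (π' s) (πstar s) ∂(occMeasure (stepKernel P π') ρ γ) :=
  value_gap_eq_kl_against_optimal_general μ P hP c C hc γ τ hτ ρ V Q hQ hBellman hperf πstar
    hπstarProb hGibbs π' hπ'Prob hπ'ac
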